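/- arXiv:2604.26688 — 8 statements merged into one kernel-verified Lean document; each statement's English description precedes it below -/
import Mathlib

section
/- Correctness of one-step formula progression at a non-final position: let φ be an LTLf formula over P, let σ ∈ (B^P)^+ be a word of length n, let 0 ≤ i < n−1, and let (φ', b) = fp(φ, σ(i)). Then σ,i ⊨ φ if and only if σ,i+1 ⊨ φ'. -/
/-- LTLf formulas over atomic propositions `P`.  `next` is the weak next `X`,
`snext` is the strong next `X[!]`, `fin` is `F`, `glob` is `G`,
`untl` is `U` and `rels` is `R`. -/
inductive LTLf (P : Type) : Type
  | tt : LTLf P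
  | ff : LTLf P
  | atom : P → LTLf P
  | not : LTLf P → LTLf P
  | and : LTLf P → LTLf P → LTLf P
  | or : LTLf P → LTLf P → LTLf P
  | next : LTLf P → LTLf P
  | snext : LTLf P → LTLf P
  | fin : LTLf P → LTLf P
  | glob : LTLf P → LTLf P
  | untl : LTLf P → LTLf P → LTLf P
  | rels : LTLf P → LTLf P → LTLf P

namespace LTLf

variable {P O U : Type}

/-- Standard LTLf satisfaction `σ, i ⊨ φ` on finite traces.  A word is a list of
Boolean assignments; positions out of range never occur in the statements. -/
def Sat (σ : List (P → Bool)) : ℕ → LTLf P → Prop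
  | _, tt => True
  | _, ff => False
  | i, atom p => (σ.getD i (fun _ => false)) p = true
  | i, not φ => ¬ Sat σ i φ
  | i, and φ ψ => Sat σ i φ ∧ Sat σ i ψ
  | i, or φ ψ => Sat σ i φ ∨ Sat σ i ψ
  | i, next φ => i + 1 = σ.length ∨ Sat σ (i + 1) φ
  | i, snext φ => i + 1 < σ.length ∧ Sat σ (i + 1) φ
  | i, fin φ => ∃ j, i ≤ j ∧ j < σ.length ∧ Sat σ j φ
  | i, glob φ => ∀ j, i ≤ j → j < σ.length → Sat σ j φ
  | i, untl φ ψ =>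
      ∃ j, i ≤ j ∧ j < σ.length ∧ Sat σ j ψ ∧ ∀ k, i ≤ k → k < j → Sat σ k φ
  | i, rels φ ψ =>
      ∀ j, i ≤ j → j < σ.length → (Sat σ j ψ ∨ ∃ k, i ≤ k ∧ k < j ∧ Sat σ k φ)

/-- Boolean connectives lifted componentwise to (formula, flag) pairs. -/
def pnot (x : LTLf P × Bool) : LTLf P × Bool := (not x.1, !x.2)

def pand (x y : LTLf P × Bool) : LTLf P × Bool := (and x.1 y.1, x.2 && y.2)

def por (x y : LTLf P × Bool) : LTLf P × Bool := (or x.1 y.1, x.2 || y.2)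

/-- Formula progression: given a formula and an assignment, return the
progressed formula together with the acceptance flag. -/
def fp (w : P → Bool) : LTLf P → LTLf P × Bool
  | tt => (tt, true)
  | ff => (ff, false)
  | atom p => if w p = true then (tt, true) else (ff, false)
  | not φ => pnot (fp w φ)
  | and φ ψ => pand (fp w φ) (fp w ψ)
  | or φ ψ => por (fp w φ) (fp w ψ)
  | next φ => (φ, true)
  | snext φ => (φ, false)
  | fin φ => por (fp w φ) (fin φ, false)
  | glob φ => pand (fp w φ) (glob φ, true)
  | untl φ ψ => por (fp w ψ) (pand (fp w φ) (untl φ ψ, false))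
  | rels φ ψ => pand (fp w ψ) (por (fp w φ) (rels φ ψ, true))

/-- Progression iterated over a nonempty word `w :: ws`. -/
def fpWord (φ : LTLf P) (w : P → Bool) : List (P → Bool) → LTLf P × Bool
  | [] => fp w φ
  | w' :: ws => fpWord (fp w φ).1 w' ws

/-- Propositional (Boolean) evaluation of a formula, treating atomic
propositions and maximal temporal subformulas as Boolean variables valued
by `v`. -/
def propEval (v : LTLf P → Bool) : LTLf P → Bool
  | tt => true
  | ff => false
  | not φ => !(propEval v φ)
  | and φ ψ => propEval v φ && propEval v ψ
  | or φ ψ => propEval v φ || propEval v ψ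
  | φ => v φ

/-- Propositional equivalence `φ ∼ ψ`. -/
def propEquiv (φ ψ : LTLf P) : Prop :=
  ∀ v : LTLf P → Bool, propEval v φ = propEval v ψ

/-- The `∼`-equivalence class `[φ]_∼` of a formula. -/
def pcls (φ : LTLf P) : Set (LTLf P) := { ψ | propEquiv φ ψ }

/-- The set of subformulas of a formula. -/
def sf : LTLf P → Set (LTLf P)
  | tt => {tt}
  | ff => {ff}
  | atom p => {atom p}
  | not φ => insert (not φ) (sf φ)
  | and φ ψ => insert (and φ ψ) (sf φ ∪ sf ψ)
  | or φ ψ => insert (or φ ψ) (sf φ ∪ sf ψ)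
  | next φ => insert (next φ) (sf φ)
  | snext φ => insert (snext φ) (sf φ)
  | fin φ => insert (fin φ) (sf φ)
  | glob φ => insert (glob φ) (sf φ)
  | untl φ ψ => insert (untl φ ψ) (sf φ ∪ sf ψ)
  | rels φ ψ => insert (rels φ ψ) (sf φ ∪ sf ψ)

/-- The Boolean closure of a set of formulas: the smallest set containing
`X ∪ {tt, ff}` and closed under `¬`, `∧`, `∨`. -/
inductive BC {P : Type} (X : Set (LTLf P)) : LTLf P → Prop
  | base {φ : LTLf P} : φ ∈ X → BC X φ
  | tt' : BC X LTLf.tt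
  | ff' : BC X LTLf.ff
  | not' {φ : LTLf P} : BC X φ → BC X (LTLf.not φ)
  | and' {φ ψ : LTLf P} : BC X φ → BC X ψ → BC X (LTLf.and φ ψ)
  | or' {φ ψ : LTLf P} : BC X φ → BC X ψ → BC X (LTLf.or φ ψ)

/-- A formula which is an atomic proposition or has a temporal operator as its
outermost connective. -/
def isAtomicOrTemporal : LTLf P → Prop
  | atom _ => True
  | next _ => True
  | snext _ => True
  | fin _ => True
  | glob _ => True
  | untl _ _ => True
  | rels _ _ => True
  | _ => False

/-- Observable progression: progress with respect to an observable assignment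
`wo ∈ B^{P_o}`, taking the (componentwise) conjunction of `fp` over all full
assignments compatible with `wo` (i.e. over all assignments of the
unobservable variables `U`). -/
noncomputable def fpObs [Fintype U] [DecidableEq U] (ψ : LTLf (O ⊕ U)) (wo : O → Bool) :
    LTLf (O ⊕ U) × Bool :=
  (((Finset.univ : Finset (U → Bool)).toList.map
      (fun wu => fp (Sum.elim wo wu) ψ)).foldr pand (tt, true))

/-- Observable progression iterated over a nonempty observable word `wo :: wos`. -/
noncomputable def fpObsWord [Fintype U] [DecidableEq U] (φ : LTLf (O ⊕ U)) (wo : O → Bool) :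
    List (O → Bool) → LTLf (O ⊕ U) × Bool
  | [] => fpObs φ wo
  | w :: ws => fpObsWord (fpObs φ wo).1 w ws

/-- The run of the belief-state construction: `runB φ σo t` is the belief state
`s_t` reached after observably progressing `φ` along the first `t` letters of `σo`. -/
noncomputable def runB [Fintype U] [DecidableEq U] (φ : LTLf (O ⊕ U)) (σo : List (O → Bool)) :
    ℕ → LTLf (O ⊕ U)
  | 0 => φ
  | t + 1 => (fpObs (runB φ σo t) (σo.getD t (fun _ => false))).1

end LTLf
namespace LTLf

theorem sat_fin_step {P : Type} (σ : List (P → Bool)) (i : ℕ) (hi : i < σ.length) (φ : LTLf P) :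
    Sat σ i (fin φ) ↔ Sat σ i φ ∨ Sat σ (i + 1) (fin φ) := by
  simp only [Sat]
  constructor
  · rintro ⟨j, hij, hj, hs⟩
    rcases eq_or_lt_of_le hij with h | h
    · exact Or.inl (h ▸ hs)
    · exact Or.inr ⟨j, h, hj, hs⟩
  · rintro (h | ⟨j, hij, hj, hs⟩)
    · exact ⟨i, le_refl _, by omega, h⟩
    · exact ⟨j, by omega, hj, hs⟩

theorem sat_glob_step {P : Type} (σ : List (P → Bool)) (i : ℕ) (hi : i < σ.length) (φ : LTLf P) :
    Sat σ i (glob φ) ↔ Sat σ i φ ∧ Sat σ (i + 1) (glob φ) := by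
  simp only [Sat]
  constructor
  · intro h
    exact ⟨h i (le_refl _) hi, fun j hj hjl => h j (by omega) hjl⟩
  · rintro ⟨h1, h2⟩ j hij hjl
    rcases eq_or_lt_of_le hij with h | h
    · exact h ▸ h1
    · exact h2 j h hjl

theorem sat_untl_step {P : Type} (σ : List (P → Bool)) (i : ℕ) (hi : i < σ.length)
    (φ ψ : LTLf P) :
    Sat σ i (untl φ ψ) ↔ Sat σ i ψ ∨ (Sat σ i φ ∧ Sat σ (i + 1) (untl φ ψ)) := by
  simp only [Sat]
  constructor
  · rintro ⟨j, hij, hjl, hs, hk⟩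
    rcases eq_or_lt_of_le hij with h | h
    · exact Or.inl (h ▸ hs)
    · exact Or.inr ⟨hk i (le_refl _) h,
        j, h, hjl, hs, fun k hk1 hk2 => hk k (by omega) hk2⟩
  · rintro (h | ⟨hφ, j, hij, hjl, hs, hk⟩)
    · exact ⟨i, le_refl _, hi, h, fun k h1 h2 => absurd h2 (by omega)⟩
    · refine ⟨j, by omega, hjl, hs, fun k h1 h2 => ?_⟩
      rcases eq_or_lt_of_le h1 with h | h
      · exact h ▸ hφ
      · exact hk k h h2

theorem sat_rels_step {P : Type} (σ : List (P → Bool)) (i : ℕ) (hi : i < σ.length)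
    (φ ψ : LTLf P) :
    Sat σ i (rels φ ψ) ↔ Sat σ i ψ ∧ (Sat σ i φ ∨ Sat σ (i + 1) (rels φ ψ)) := by
  simp only [Sat]
  constructor
  · intro h
    have hψ : Sat σ i ψ := by
      rcases h i (le_refl _) hi with h' | ⟨k, h1, h2, _⟩
      · exact h'
      · omega
    refine ⟨hψ, ?_⟩
    by_cases hφ : Sat σ i φ
    · exact Or.inl hφ
    · refine Or.inr fun j hj hjl => ?_
      rcases h j (by omega) hjl with h' | ⟨k, h1, h2, h3⟩
      · exact Or.inl h'
      · rcases eq_or_lt_of_le h1 with h4 | h4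
        · exact absurd (h4 ▸ h3) hφ
        · exact Or.inr ⟨k, h4, h2, h3⟩
  · rintro ⟨hψ, h⟩ j hij hjl
    rcases eq_or_lt_of_le hij with h' | h'
    · exact Or.inl (h' ▸ hψ)
    rcases h with hφ | hr
    · exact Or.inr ⟨i, le_refl _, h', hφ⟩
    · rcases hr j h' hjl with h'' | ⟨k, h1, h2, h3⟩
      · exact Or.inl h''
      · exact Or.inr ⟨k, by omega, h2, h3⟩

end LTLf

/-- correctness of one-step formula progression at a non-final
position: for `0 ≤ i < n - 1`, `σ,i ⊨ φ` iff `σ,i+1 ⊨ fp(φ, σ(i)).formula`. -/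
theorem fp_correct_nonfinal {P : Type} [Fintype P] [DecidableEq P]
    (φ : LTLf P) (σ : List (P → Bool)) (i : ℕ) (hi : i + 1 < σ.length) :
    LTLf.Sat σ i φ ↔ LTLf.Sat σ (i + 1) (LTLf.fp (σ.getD i (fun _ => false)) φ).1 := by
  induction φ with
  | tt => simp [LTLf.fp, LTLf.Sat]
  | ff => simp [LTLf.fp, LTLf.Sat]
  | atom p =>
    by_cases h : (σ.getD i (fun _ => false)) p = true
    · simp [LTLf.fp, h, LTLf.Sat]
    · simp [LTLf.fp, h, LTLf.Sat]
  | not φ ih =>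
    simp only [LTLf.fp, LTLf.pnot, LTLf.Sat]
    rw [ih]
  | and φ ψ ihφ ihψ =>
    simp only [LTLf.fp, LTLf.pand, LTLf.Sat]
    rw [ihφ, ihψ]
  | or φ ψ ihφ ihψ =>
    simp only [LTLf.fp, LTLf.por, LTLf.Sat]
    rw [ihφ, ihψ]
  | next φ =>
    simp only [LTLf.fp, LTLf.Sat]
    have : ¬ (i + 1 = σ.length) := by omega
    tauto
  | snext φ =>
    simp only [LTLf.fp, LTLf.Sat]
    tauto
  | fin φ ih =>
    rw [LTLf.sat_fin_step _ _ (by omega)]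
    simp only [LTLf.fp, LTLf.por, LTLf.Sat]
    rw [ih]
  | glob φ ih =>
    rw [LTLf.sat_glob_step _ _ (by omega)]
    simp only [LTLf.fp, LTLf.pand, LTLf.Sat]
    rw [ih]
  | untl φ ψ ihφ ihψ =>
    rw [LTLf.sat_untl_step _ _ (by omega)]
    simp only [LTLf.fp, LTLf.por, LTLf.pand, LTLf.Sat]
    rw [ihφ, ihψ]
  | rels φ ψ ihφ ihψ =>
    rw [LTLf.sat_rels_step _ _ (by omega)]
    simp only [LTLf.fp, LTLf.pand, LTLf.por, LTLf.Sat]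
    rw [ihφ, ihψ]
end

section
/- Correctness of the acceptance flag of formula progression at the final position: let φ be an LTLf formula over P, let σ ∈ (B^P)^+ be a word of length n, and let (φ', b) = fp(φ, σ(n−1)). Then σ,n−1 ⊨ φ if and only if b = ⊤. -/
namespace LTLf

variable {P O U : Type}

theorem fp_flag_aux {P : Type} (σ : List (P → Bool)) (i : ℕ) (h : i + 1 = σ.length)
    (φ : LTLf P) :
    LTLf.Sat σ i φ ↔ (LTLf.fp (σ.getD i (fun _ => false)) φ).2 = true := by
  have hj : ∀ j, (i ≤ j ∧ j < σ.length) ↔ j = i := by omega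
  induction φ with
  | tt => simp [Sat, fp]
  | ff => simp [Sat, fp]
  | atom p =>
    simp only [Sat, fp]
    by_cases hp : (σ.getD i (fun _ => false)) p = true <;> simp [hp]
  | not φ ih => simp [Sat, fp, pnot, ih]
  | and φ ψ ihφ ihψ => simp [Sat, fp, pand, ihφ, ihψ]
  | or φ ψ ihφ ihψ => simp [Sat, fp, por, ihφ, ihψ]
  | next φ => simp [Sat, fp, h]
  | snext φ => simp [Sat, fp]; omega
  | fin φ ih =>
    simp only [Sat, fp, por]
    constructor
    · rintro ⟨j, hj1, hj2, hs⟩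
      have : j = i := (hj j).1 ⟨hj1, hj2⟩
      subst this
      simpa [List.getD] using ih.1 hs
    · intro hb
      simp only [Bool.or_eq_true, Bool.false_eq_true, or_false] at hb
      exact ⟨i, le_refl i, by omega, ih.2 hb⟩
  | glob φ ih =>
    simp only [Sat, fp, pand]
    constructor
    · intro hs
      simpa [List.getD] using ih.1 (hs i (le_refl i) (by omega))
    · intro hb j hj1 hj2
      have : j = i := (hj j).1 ⟨hj1, hj2⟩
      subst this
      simp only [Bool.and_eq_true, and_true] at hb
      exact ih.2 hb
  | untl φ ψ ihφ ihψ =>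
    simp only [Sat, fp, por, pand]
    constructor
    · rintro ⟨j, hj1, hj2, hs, _⟩
      have : j = i := (hj j).1 ⟨hj1, hj2⟩
      subst this
      simpa [List.getD] using ihψ.1 hs
    · intro hb
      simp only [Bool.or_eq_true, Bool.and_eq_true, Bool.false_eq_true, and_false,
        or_false] at hb
      exact ⟨i, le_refl i, by omega, ihψ.2 hb, fun k hk1 hk2 => by omega⟩
  | rels φ ψ ihφ ihψ =>
    simp only [Sat, fp, pand, por]
    constructor
    · intro hs
      rcases hs i (le_refl i) (by omega) with h' | ⟨k, hk1, hk2, _⟩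
      · simpa [List.getD] using ihψ.1 h'
      · omega
    · intro hb j hj1 hj2
      have : j = i := (hj j).1 ⟨hj1, hj2⟩
      subst this
      simp only [Bool.and_eq_true, Bool.or_eq_true, Bool.true_eq, and_true] at hb
      exact Or.inl (ihψ.2 hb.1)

end LTLf
/-- correctness of the acceptance flag of formula progression at
the final position `n - 1`. -/
theorem fp_flag_correct_final {P : Type} [Fintype P] [DecidableEq P]
    (φ : LTLf P) (σ : List (P → Bool)) (hσ : σ ≠ []) :
    LTLf.Sat σ (σ.length - 1) φ ↔
      (LTLf.fp (σ.getD (σ.length - 1) (fun _ => false)) φ).2 = true := by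
  exact LTLf.fp_flag_aux σ (σ.length - 1) (by cases σ <;> simp_all) φ
end

section
/- Word-level correctness of formula progression: for every LTLf formula φ over P and every nonempty finite word σ ∈ (B^P)^+, the Boolean flag of fp(φ, σ) equals ⊤ if and only if σ,0 ⊨ φ. In particular, σ ∈ L(φ) if and only if fp(φ, σ) has flag ⊤. -/
namespace LTLf

lemma sat_shift {P : Type} (φ : LTLf P) : ∀ (w : P → Bool) (ws : List (P → Bool)) (i : ℕ),
    Sat (w :: ws) (i + 1) φ ↔ Sat ws i φ := by
  induction φ with
  | tt => intro w ws i; simp [Sat]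
  | ff => intro w ws i; simp [Sat]
  | atom p => intro w ws i; simp [Sat]
  | not φ ih => intro w ws i; simp [Sat, ih]
  | and φ ψ ihφ ihψ => intro w ws i; simp [Sat, ihφ, ihψ]
  | or φ ψ ihφ ihψ => intro w ws i; simp [Sat, ihφ, ihψ]
  | next φ ih =>
    intro w ws i
    simp only [Sat, List.length_cons, ih]
    constructor
    · rintro (h | h); · left; omega
      · right; exact h
    · rintro (h | h); · left; omega
      · right; exact h
  | snext φ ih =>
    intro w ws i
    simp only [Sat, List.length_cons, ih]
    constructor
    · rintro ⟨h1, h2⟩; exact ⟨by omega, h2⟩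
    · rintro ⟨h1, h2⟩; exact ⟨by omega, h2⟩
  | fin φ ih =>
    intro w ws i
    simp only [Sat, List.length_cons]
    constructor
    · rintro ⟨j, h1, h2, h3⟩
      obtain ⟨j', rfl⟩ : ∃ j', j = j' + 1 := ⟨j - 1, by omega⟩
      exact ⟨j', by omega, by omega, (ih w ws j').mp h3⟩
    · rintro ⟨j, h1, h2, h3⟩
      exact ⟨j + 1, by omega, by omega, (ih w ws j).mpr h3⟩
  | glob φ ih =>
    intro w ws i
    simp only [Sat, List.length_cons]
    constructor
    · intro h j hj hj'
      exact (ih w ws j).mp (h (j + 1) (by omega) (by omega))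
    · intro h j hj hj'
      obtain ⟨j', rfl⟩ : ∃ j', j = j' + 1 := ⟨j - 1, by omega⟩
      exact (ih w ws j').mpr (h j' (by omega) (by omega))
  | untl φ ψ ihφ ihψ =>
    intro w ws i
    simp only [Sat, List.length_cons]
    constructor
    · rintro ⟨j, h1, h2, h3, h4⟩
      obtain ⟨j', rfl⟩ : ∃ j', j = j' + 1 := ⟨j - 1, by omega⟩
      refine ⟨j', by omega, by omega, (ihψ w ws j').mp h3, fun k hk hk' => ?_⟩
      exact (ihφ w ws k).mp (h4 (k + 1) (by omega) (by omega))
    · rintro ⟨j, h1, h2, h3, h4⟩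
      refine ⟨j + 1, by omega, by omega, (ihψ w ws j).mpr h3, fun k hk hk' => ?_⟩
      obtain ⟨k', rfl⟩ : ∃ k', k = k' + 1 := ⟨k - 1, by omega⟩
      exact (ihφ w ws k').mpr (h4 k' (by omega) (by omega))
  | rels φ ψ ihφ ihψ =>
    intro w ws i
    simp only [Sat, List.length_cons]
    constructor
    · intro h j hj hj'
      rcases h (j + 1) (by omega) (by omega) with h' | ⟨k, hk1, hk2, hk3⟩
      · left; exact (ihψ w ws j).mp h'
      · obtain ⟨k', rfl⟩ : ∃ k', k = k' + 1 := ⟨k - 1, by omega⟩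
        right; exact ⟨k', by omega, by omega, (ihφ w ws k').mp hk3⟩
    · intro h j hj hj'
      obtain ⟨j', rfl⟩ : ∃ j', j = j' + 1 := ⟨j - 1, by omega⟩
      rcases h j' (by omega) (by omega) with h' | ⟨k, hk1, hk2, hk3⟩
      · left; exact (ihψ w ws j').mpr h'
      · right; exact ⟨k + 1, by omega, by omega, (ihφ w ws k).mpr hk3⟩

lemma sat_fp {P : Type} (φ : LTLf P) :
    ∀ (w w' : P → Bool) (ws : List (P → Bool)),
      Sat (w :: w' :: ws) 0 φ ↔ Sat (w' :: ws) 0 (fp w φ).1 := by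
  induction φ with
  | tt => intro w w' ws; simp [Sat, fp]
  | ff => intro w w' ws; simp [Sat, fp]
  | atom p =>
    intro w w' ws
    by_cases h : w p <;> simp [Sat, fp, h]
  | not φ ih => intro w w' ws; simp [Sat, fp, pnot, ih]
  | and φ ψ ihφ ihψ => intro w w' ws; simp [Sat, fp, pand, ihφ, ihψ]
  | or φ ψ ihφ ihψ => intro w w' ws; simp [Sat, fp, por, ihφ, ihψ]
  | next φ ih =>
    intro w w' ws
    simp only [Sat, fp, List.length_cons, sat_shift]
    constructor
    · rintro (h | h); · omega
      · exact h
    · intro h; right; exact h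
  | snext φ ih =>
    intro w w' ws
    simp only [Sat, fp, List.length_cons, sat_shift]
    constructor
    · rintro ⟨_, h⟩; exact h
    · intro h; exact ⟨by omega, h⟩
  | fin φ ih =>
    intro w w' ws
    simp only [Sat, fp, por, List.length_cons]
    constructor
    · rintro ⟨j, h1, h2, h3⟩
      rcases Nat.eq_zero_or_pos j with rfl | hj
      · left; exact (ih w w' ws).mp h3
      · obtain ⟨j', rfl⟩ : ∃ j', j = j' + 1 := ⟨j - 1, by omega⟩
        right; exact ⟨j', by omega, by omega, (sat_shift φ w _ j').mp h3⟩
    · rintro (h | ⟨j, h1, h2, h3⟩)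
      · exact ⟨0, by omega, by omega, (ih w w' ws).mpr h⟩
      · exact ⟨j + 1, by omega, by omega, (sat_shift φ w _ j).mpr h3⟩
  | glob φ ih =>
    intro w w' ws
    simp only [Sat, fp, pand, List.length_cons]
    constructor
    · intro h
      refine ⟨(ih w w' ws).mp (h 0 (by omega) (by omega)), fun j hj hj' => ?_⟩
      exact (sat_shift φ w _ j).mp (h (j + 1) (by omega) (by omega))
    · rintro ⟨h0, h⟩ j hj hj'
      rcases Nat.eq_zero_or_pos j with rfl | hjp
      · exact (ih w w' ws).mpr h0
      · obtain ⟨j', rfl⟩ : ∃ j', j = j' + 1 := ⟨j - 1, by omega⟩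
        exact (sat_shift φ w _ j').mpr (h j' (by omega) (by omega))
  | untl φ ψ ihφ ihψ =>
    intro w w' ws
    simp only [Sat, fp, por, pand, List.length_cons]
    constructor
    · rintro ⟨j, h1, h2, h3, h4⟩
      rcases Nat.eq_zero_or_pos j with rfl | hj
      · left; exact (ihψ w w' ws).mp h3
      · obtain ⟨j', rfl⟩ : ∃ j', j = j' + 1 := ⟨j - 1, by omega⟩
        right
        refine ⟨(ihφ w w' ws).mp (h4 0 (by omega) (by omega)),
          j', by omega, by omega, (sat_shift ψ w _ j').mp h3, fun k hk hk' => ?_⟩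
        exact (sat_shift φ w _ k).mp (h4 (k + 1) (by omega) (by omega))
    · rintro (h | ⟨h0, j, h1, h2, h3, h4⟩)
      · exact ⟨0, by omega, by omega, (ihψ w w' ws).mpr h, fun k hk hk' => by omega⟩
      · refine ⟨j + 1, by omega, by omega, (sat_shift ψ w _ j).mpr h3, fun k hk hk' => ?_⟩
        rcases Nat.eq_zero_or_pos k with rfl | hkp
        · exact (ihφ w w' ws).mpr h0
        · obtain ⟨k', rfl⟩ : ∃ k', k = k' + 1 := ⟨k - 1, by omega⟩
          exact (sat_shift φ w _ k').mpr (h4 k' (by omega) (by omega))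
  | rels φ ψ ihφ ihψ =>
    intro w w' ws
    simp only [Sat, fp, pand, por, List.length_cons]
    constructor
    · intro h
      have h0 : Sat (w' :: ws) 0 (fp w ψ).1 := by
        rcases h 0 (by omega) (by omega) with h' | ⟨k, hk1, hk2, _⟩
        · exact (ihψ w w' ws).mp h'
        · omega
      refine ⟨h0, ?_⟩
      by_cases hφ0 : Sat (w :: w' :: ws) 0 φ
      · left; exact (ihφ w w' ws).mp hφ0
      · right
        intro j hj hj'
        rcases h (j + 1) (by omega) (by omega) with h' | ⟨k, hk1, hk2, hk3⟩
        · left; exact (sat_shift ψ w _ j).mp h'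
        · rcases Nat.eq_zero_or_pos k with rfl | hkp
          · exact absurd hk3 hφ0
          · obtain ⟨k', rfl⟩ : ∃ k', k = k' + 1 := ⟨k - 1, by omega⟩
            right; exact ⟨k', by omega, by omega, (sat_shift φ w _ k').mp hk3⟩
    · rintro ⟨h0, h⟩ j hj hj'
      rcases Nat.eq_zero_or_pos j with rfl | hjp
      · left; exact (ihψ w w' ws).mpr h0
      · obtain ⟨j', rfl⟩ : ∃ j', j = j' + 1 := ⟨j - 1, by omega⟩
        rcases h with hφ0 | hR
        · right; exact ⟨0, by omega, by omega, (ihφ w w' ws).mpr hφ0⟩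
        · rcases hR j' (by omega) (by omega) with h' | ⟨k, hk1, hk2, hk3⟩
          · left; exact (sat_shift ψ w _ j').mpr h'
          · right; exact ⟨k + 1, by omega, by omega, (sat_shift φ w _ k).mpr hk3⟩

lemma fp_flag {P : Type} (φ : LTLf P) :
    ∀ (w : P → Bool), ((fp w φ).2 = true ↔ Sat [w] 0 φ) := by
  induction φ with
  | tt => intro w; simp [Sat, fp]
  | ff => intro w; simp [Sat, fp]
  | atom p => intro w; by_cases h : w p <;> simp [Sat, fp, h]
  | not φ ih =>
    intro w
    simp only [Sat, fp, pnot, Bool.not_eq_true', ← ih]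
    cases (fp w φ).2 <;> simp
  | and φ ψ ihφ ihψ => intro w; simp [Sat, fp, pand, ihφ, ihψ]
  | or φ ψ ihφ ihψ => intro w; simp [Sat, fp, por, ihφ, ihψ]
  | next φ ih => intro w; simp [Sat, fp]
  | snext φ ih => intro w; simp [Sat, fp]
  | fin φ ih =>
    intro w
    simp only [Sat, fp, por, Bool.or_false, List.length_cons, List.length_nil, ih]
    constructor
    · intro h; exact ⟨0, by omega, by omega, h⟩
    · rintro ⟨j, h1, h2, h3⟩
      obtain rfl : j = 0 := by omega
      exact h3
  | glob φ ih =>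
    intro w
    simp only [Sat, fp, pand, Bool.and_true, List.length_cons, List.length_nil, ih]
    constructor
    · intro h j hj hj'
      obtain rfl : j = 0 := by omega
      exact h
    · intro h; exact h 0 (by omega) (by omega)
  | untl φ ψ ihφ ihψ =>
    intro w
    simp only [Sat, fp, por, pand, Bool.and_false, Bool.or_false,
      List.length_cons, List.length_nil, ihψ]
    constructor
    · intro h; exact ⟨0, by omega, by omega, h, fun k hk hk' => by omega⟩
    · rintro ⟨j, h1, h2, h3, _⟩
      obtain rfl : j = 0 := by omega
      exact h3
  | rels φ ψ ihφ ihψ =>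
    intro w
    simp only [Sat, fp, pand, por, Bool.or_true, Bool.and_true,
      List.length_cons, List.length_nil, ihψ]
    constructor
    · intro h j hj hj'
      obtain rfl : j = 0 := by omega
      left; exact h
    · intro h
      rcases h 0 (by omega) (by omega) with h' | ⟨k, hk1, hk2, _⟩
      · exact h'
      · omega

end LTLf

/-- word-level correctness of formula progression: for every
nonempty word `w :: ws`, the flag of `fp(φ, w :: ws)` is `⊤` iff
`w :: ws, 0 ⊨ φ`, i.e. iff `w :: ws ∈ L(φ)`. -/
theorem fpWord_flag_correct {P : Type} [Fintype P] [DecidableEq P]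
    (φ : LTLf P) :
    ∀ (w : P → Bool) (ws : List (P → Bool)),
      ((LTLf.fpWord φ w ws).2 = true ↔ LTLf.Sat (w :: ws) 0 φ) := by
  intro w ws
  induction ws generalizing φ w with
  | nil => exact LTLf.fp_flag φ w
  | cons w' ws ih =>
    rw [LTLf.fpWord]
    rw [ih]
    exact (LTLf.sat_fp φ w w' ws).symm
end

section
/- Formula progression preserves propositional equivalence: if φ₁ and φ₂ are LTLf formulas over P with φ₁ ∼ φ₂, then for every assignment w ∈ B^P, writing (φ₁', b₁) = fp(φ₁, w) and (φ₂', b₂) = fp(φ₂, w), one has φ₁' ∼ φ₂' and b₁ = b₂. -/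
namespace LTLf

variable {P O U : Type}

/-- Auxiliary valuation so that `propEval v (fp w φ).1 = propEval (gval w v) φ`. -/
def gval (w : P → Bool) (v : LTLf P → Bool) : LTLf P → Bool
  | .atom p => w p
  | .next φ => propEval v φ
  | .snext φ => propEval v φ
  | .fin φ => propEval v (fp w φ).1 || v (.fin φ)
  | .glob φ => propEval v (fp w φ).1 && v (.glob φ)
  | .untl φ ψ => propEval v (fp w ψ).1 || (propEval v (fp w φ).1 && v (.untl φ ψ))
  | .rels φ ψ => propEval v (fp w ψ).1 && (propEval v (fp w φ).1 || v (.rels φ ψ))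
  | φ => v φ

/-- Auxiliary valuation so that `(fp w φ).2 = propEval (kval w) φ`. -/
def kval (w : P → Bool) : LTLf P → Bool
  | .atom p => w p
  | .next _ => true
  | .snext _ => false
  | .fin φ => (fp w φ).2
  | .glob φ => (fp w φ).2
  | .untl _ ψ => (fp w ψ).2
  | .rels _ ψ => (fp w ψ).2
  | _ => false

theorem propEval_fp_fst (w : P → Bool) (v : LTLf P → Bool) (φ : LTLf P) :
    propEval v (fp w φ).1 = propEval (gval w v) φ := by
  induction φ with
  | tt => rfl
  | ff => rfl
  | atom p =>
      by_cases hp : w p = true <;> simp [fp, hp, propEval, gval]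
  | not φ ih => simp [fp, pnot, propEval, ih]
  | and φ ψ ih1 ih2 => simp [fp, pand, propEval, ih1, ih2]
  | or φ ψ ih1 ih2 => simp [fp, por, propEval, ih1, ih2]
  | next φ _ => simp [fp, propEval, gval]
  | snext φ _ => simp [fp, propEval, gval]
  | fin φ _ => simp [fp, por, propEval, gval]
  | glob φ _ => simp [fp, pand, propEval, gval]
  | untl φ ψ _ _ => simp [fp, por, pand, propEval, gval]
  | rels φ ψ _ _ => simp [fp, por, pand, propEval, gval]

theorem fp_snd (w : P → Bool) (φ : LTLf P) :
    (fp w φ).2 = propEval (kval w) φ := by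
  induction φ with
  | tt => rfl
  | ff => rfl
  | atom p =>
      by_cases hp : w p = true <;> simp [fp, hp, propEval, kval]
  | not φ ih => simp [fp, pnot, propEval, ih]
  | and φ ψ ih1 ih2 => simp [fp, pand, propEval, ih1, ih2]
  | or φ ψ ih1 ih2 => simp [fp, por, propEval, ih1, ih2]
  | next φ _ => simp [fp, propEval, kval]
  | snext φ _ => simp [fp, propEval, kval]
  | fin φ ih => simp [fp, por, propEval, kval, ih]
  | glob φ ih => simp [fp, pand, propEval, kval, ih]
  | untl φ ψ _ ih2 => simp [fp, por, pand, propEval, kval, ih2]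
  | rels φ ψ _ ih2 => simp [fp, por, pand, propEval, kval, ih2]

end LTLf
/-- formula progression preserves propositional equivalence,
both in the progressed formula and in the acceptance flag. -/
theorem fp_preserves_propEquiv {P : Type} [Fintype P] [DecidableEq P]
    (φ₁ φ₂ : LTLf P) (h : LTLf.propEquiv φ₁ φ₂) (w : P → Bool) :
    LTLf.propEquiv (LTLf.fp w φ₁).1 (LTLf.fp w φ₂).1 ∧
      (LTLf.fp w φ₁).2 = (LTLf.fp w φ₂).2 := by
  constructor
  · intro v
    rw [LTLf.propEval_fp_fst, LTLf.propEval_fp_fst]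
    exact h _
  · rw [LTLf.fp_snd, LTLf.fp_snd]
    exact h _
end

section
/- Semantics of one-step observable progression (Lemma 1 of the paper): let P = P_o ⊎ P_u, let ψ be an LTLf formula over P, let w_o ∈ B^{P_o}, and let ψ' be the formula component of fpObs(ψ, w_o). Let σ ∈ (B^P)^+ be a word and let i be a position with i < |σ|−1 such that σ(i)|_{P_o} = w_o. Then σ,i+1 ⊨ ψ' if and only if for every w_u ∈ B^{P_u} one has σ^{w_u},i ⊨ ψ, where σ^{w_u} is the word obtained from σ by changing only position i: σ^{w_u}(i) = w_o ⊔ w_u and σ^{w_u}(j) = σ(j) for all j ≠ i. -/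
namespace LTLf

/-- Satisfaction at position `j` only depends on positions `≥ j`. -/
theorem sat_congr {P : Type} (φ : LTLf P) :
    ∀ (σ σ' : List (P → Bool)) (j : ℕ), σ.length = σ'.length →
      (∀ k, j ≤ k → σ.getD k (fun _ => false) = σ'.getD k (fun _ => false)) →
      (Sat σ j φ ↔ Sat σ' j φ) := by
  induction φ with
  | tt => intro σ σ' j hlen hag; simp [Sat]
  | ff => intro σ σ' j hlen hag; simp [Sat]
  | atom p => intro σ σ' j hlen hag; simp only [Sat]; rw [hag j le_rfl]
  | not φ ih => intro σ σ' j hlen hag; simp only [Sat]; rw [ih σ σ' j hlen hag]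
  | and φ ψ ih1 ih2 =>
      intro σ σ' j hlen hag; simp only [Sat]
      rw [ih1 σ σ' j hlen hag, ih2 σ σ' j hlen hag]
  | or φ ψ ih1 ih2 =>
      intro σ σ' j hlen hag; simp only [Sat]
      rw [ih1 σ σ' j hlen hag, ih2 σ σ' j hlen hag]
  | next φ ih =>
      intro σ σ' j hlen hag; simp only [Sat, hlen]
      rw [ih σ σ' (j+1) hlen (fun k hk => hag k (by omega))]
  | snext φ ih =>
      intro σ σ' j hlen hag; simp only [Sat, hlen]
      rw [ih σ σ' (j+1) hlen (fun k hk => hag k (by omega))]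
  | fin φ ih =>
      intro σ σ' j hlen hag; simp only [Sat, hlen]
      exact exists_congr fun j' => and_congr_right fun hj' =>
        and_congr_right fun _ => ih σ σ' j' hlen (fun k hk => hag k (by omega))
  | glob φ ih =>
      intro σ σ' j hlen hag; simp only [Sat, hlen]
      exact forall_congr' fun j' => imp_congr_right fun hj' =>
        imp_congr_right fun _ => ih σ σ' j' hlen (fun k hk => hag k (by omega))
  | untl φ ψ ih1 ih2 =>
      intro σ σ' j hlen hag; simp only [Sat, hlen]
      exact exists_congr fun j' => and_congr_right fun hj' =>
        and_congr_right fun _ =>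
          and_congr (ih2 σ σ' j' hlen (fun k hk => hag k (by omega)))
            (forall_congr' fun k => imp_congr_right fun hk =>
              imp_congr_right fun _ => ih1 σ σ' k hlen (fun m hm => hag m (by omega)))
  | rels φ ψ ih1 ih2 =>
      intro σ σ' j hlen hag; simp only [Sat, hlen]
      exact forall_congr' fun j' => imp_congr_right fun hj' =>
        imp_congr_right fun _ =>
          or_congr (ih2 σ σ' j' hlen (fun k hk => hag k (by omega)))
            (exists_congr fun k => and_congr_right fun hk =>
              and_congr_right fun _ => ih1 σ σ' k hlen (fun m hm => hag m (by omega)))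

/-- One-step semantics of progression. -/
theorem sat_fp_s6 {P : Type} (φ : LTLf P) (σ : List (P → Bool)) (i : ℕ)
    (hi : i + 1 < σ.length) (w : P → Bool)
    (hw : σ.getD i (fun _ => false) = w) :
    Sat σ (i + 1) (fp w φ).1 ↔ Sat σ i φ := by
  induction φ with
  | tt => simp [fp, Sat]
  | ff => simp [fp, Sat]
  | atom p =>
      simp only [fp]
      split
      · next h => simp only [Sat]; rw [hw]; simp [h]
      · next h => simp only [Sat]; rw [hw]; simp [h]
  | not φ ih => simp only [fp, pnot, Sat]; rw [ih]
  | and φ ψ ih1 ih2 => simp only [fp, pand, Sat]; rw [ih1, ih2]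
  | or φ ψ ih1 ih2 => simp only [fp, por, Sat]; rw [ih1, ih2]
  | next φ _ =>
      simp only [fp, Sat]
      exact ⟨Or.inr, fun h => h.resolve_left (by omega)⟩
  | snext φ _ => simp only [fp, Sat]; exact (and_iff_right hi).symm
  | fin φ ih =>
      simp only [fp, por, Sat]; rw [ih]
      constructor
      · rintro (h | ⟨j, hj1, hj2, hj3⟩)
        · exact ⟨i, le_rfl, by omega, h⟩
        · exact ⟨j, by omega, hj2, hj3⟩
      · rintro ⟨j, hij, hjlen, hj⟩
        rcases eq_or_lt_of_le hij with rfl | hlt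
        · exact Or.inl hj
        · exact Or.inr ⟨j, by omega, hjlen, hj⟩
  | glob φ ih =>
      simp only [fp, pand, Sat]; rw [ih]
      constructor
      · rintro ⟨h0, hall⟩ j hij hjlen
        rcases eq_or_lt_of_le hij with rfl | hlt
        · exact h0
        · exact hall j (by omega) hjlen
      · intro h
        exact ⟨h i le_rfl (by omega), fun j hj hjlen => h j (by omega) hjlen⟩
  | untl φ ψ ih1 ih2 =>
      simp only [fp, por, pand, Sat]; rw [ih1, ih2]
      constructor
      · rintro (h | ⟨hφ, j, hj1, hj2, hj3, hj4⟩)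
        · exact ⟨i, le_rfl, by omega, h, fun k hk1 hk2 => by omega⟩
        · refine ⟨j, by omega, hj2, hj3, fun k hk1 hk2 => ?_⟩
          rcases eq_or_lt_of_le hk1 with rfl | hlt
          · exact hφ
          · exact hj4 k (by omega) hk2
      · rintro ⟨j, hij, hjlen, hψ, hall⟩
        rcases eq_or_lt_of_le hij with rfl | hlt
        · exact Or.inl hψ
        · exact Or.inr ⟨hall i le_rfl (by omega),
            j, by omega, hjlen, hψ, fun k hk1 hk2 => hall k (by omega) hk2⟩
  | rels φ ψ ih1 ih2 =>
      simp only [fp, pand, por, Sat]; rw [ih1, ih2]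
      constructor
      · rintro ⟨hψ, hrest⟩ j hij hjlen
        rcases eq_or_lt_of_le hij with rfl | hlt
        · exact Or.inl hψ
        · rcases hrest with hφ | hall
          · exact Or.inr ⟨i, le_rfl, by omega, hφ⟩
          · rcases hall j (by omega) hjlen with h | ⟨k, hk1, hk2, hk3⟩
            · exact Or.inl h
            · exact Or.inr ⟨k, by omega, hk2, hk3⟩
      · intro h
        have hψ : Sat σ i ψ := by
          rcases h i le_rfl (by omega) with h' | ⟨k, hk1, hk2, _⟩
          · exact h'
          · omega
        refine ⟨hψ, ?_⟩
        by_cases hφ : Sat σ i φ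
        · exact Or.inl hφ
        · refine Or.inr fun j hij hjlen => ?_
          rcases h j (by omega) hjlen with h' | ⟨k, hk1, hk2, hk3⟩
          · exact Or.inl h'
          · rcases eq_or_lt_of_le hk1 with rfl | hlt
            · exact absurd hk3 hφ
            · exact Or.inr ⟨k, by omega, hk2, hk3⟩

theorem sat_foldr_pand {P : Type} (σ : List (P → Bool)) (j : ℕ)
    (l : List (LTLf P × Bool)) :
    Sat σ j (l.foldr pand (tt, true)).1 ↔ ∀ x ∈ l, Sat σ j x.1 := by
  induction l with
  | nil => simp [Sat]
  | cons x xs ih => simp only [List.foldr_cons, pand, Sat, List.mem_cons]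
                    rw [ih]
                    constructor
                    · rintro ⟨h1, h2⟩ y (rfl | hy)
                      · exact h1
                      · exact h2 y hy
                    · intro h
                      exact ⟨h x (Or.inl rfl), fun y hy => h y (Or.inr hy)⟩

end LTLf

/-- Lemma 1: semantics of one-step observable progression.
`P = O ⊎ U`; `σ^{w_u}` is `σ` with only position `i` changed to `w_o ⊔ w_u`. -/
theorem fpObs_semantics {O U : Type} [Fintype O] [DecidableEq O]
    [Fintype U] [DecidableEq U]
    (ψ : LTLf (O ⊕ U)) (wo : O → Bool)
    (σ : List ((O ⊕ U) → Bool)) (i : ℕ) (hi : i + 1 < σ.length)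
    (hobs : ∀ o : O, σ.getD i (fun _ => false) (Sum.inl o) = wo o) :
    LTLf.Sat σ (i + 1) (LTLf.fpObs ψ wo).1 ↔
      ∀ wu : U → Bool, LTLf.Sat (σ.set i (Sum.elim wo wu)) i ψ := by
  rw [LTLf.fpObs, LTLf.sat_foldr_pand]
  simp only [List.mem_map, Finset.mem_toList, Finset.mem_univ, true_and]
  constructor
  · intro h wu
    have h1 := h _ ⟨wu, rfl⟩
    set w := Sum.elim wo wu with hwdef
    set σ' := σ.set i w with hσ'
    have hlen : σ.length = σ'.length := by simp [hσ']
    have hget : σ'.getD i (fun _ => false) = w := by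
      rw [List.getD_eq_getElem _ _ (by omega)]
      simp [hσ', List.getElem_set, show i < σ.length by omega]
    have hcg := LTLf.sat_congr ((LTLf.fp w ψ).1) σ σ' (i+1) hlen
      (fun k hk => by
        rcases Nat.lt_or_ge k σ.length with hk2 | hk2
        · rw [List.getD_eq_getElem _ _ hk2, List.getD_eq_getElem _ _ (by omega)]
          simp only [hσ', List.getElem_set]
          rw [if_neg (by omega : ¬ i = k)]
        · rw [List.getD_eq_default _ _ (by omega), List.getD_eq_default _ _ (by omega)])
    exact (LTLf.sat_fp_s6 ψ σ' i (by omega) w hget).mp (hcg.mp h1)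
  · rintro h x ⟨wu, rfl⟩
    have h1 := h wu
    set w := Sum.elim wo wu with hwdef
    set σ' := σ.set i w with hσ'
    have hlen : σ.length = σ'.length := by simp [hσ']
    have hget : σ'.getD i (fun _ => false) = w := by
      rw [List.getD_eq_getElem _ _ (by omega)]
      simp [hσ', List.getElem_set, show i < σ.length by omega]
    have hcg := LTLf.sat_congr ((LTLf.fp w ψ).1) σ σ' (i+1) hlen
      (fun k hk => by
        rcases Nat.lt_or_ge k σ.length with hk2 | hk2
        · rw [List.getD_eq_getElem _ _ hk2, List.getD_eq_getElem _ _ (by omega)]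
          simp only [hσ', List.getElem_set]
          rw [if_neg (by omega : ¬ i = k)]
        · rw [List.getD_eq_default _ _ (by omega), List.getD_eq_default _ _ (by omega)])
    exact hcg.mpr ((LTLf.sat_fp_s6 ψ σ' i (by omega) w hget).mpr h1)
end

section
/- Observable progression preserves propositional equivalence (Lemma 2 of the paper): let P = P_o ⊎ P_u and let φ and ψ be LTLf formulas over P with φ ∼ ψ. For any w_o ∈ B^{P_o}, let φ' and ψ' be the formula components of fpObs(φ, w_o) and fpObs(ψ, w_o), respectively. Then φ' ∼ ψ'. -/
namespace LTLf

variable {P O U : Type}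

lemma propEval_fp {P : Type} (w : P → Bool) (v : LTLf P → Bool) :
    ∀ φ : LTLf P, propEval v (fp w φ).1 = propEval (fun χ => propEval v (fp w χ).1) φ := by
  intro φ
  induction φ with
  | tt => rfl
  | ff => rfl
  | atom p => rfl
  | not φ ih => simp [fp, pnot, propEval, ih]
  | and φ ψ ih1 ih2 => simp [fp, pand, propEval, ih1, ih2]
  | or φ ψ ih1 ih2 => simp [fp, por, propEval, ih1, ih2]
  | next φ ih => rfl
  | snext φ ih => rfl
  | fin φ ih => rfl
  | glob φ ih => rfl
  | untl φ ψ ih1 ih2 => rfl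
  | rels φ ψ ih1 ih2 => rfl

lemma fp_preserves_propEquiv {P : Type} {φ ψ : LTLf P} (h : propEquiv φ ψ)
    (w : P → Bool) : propEquiv (fp w φ).1 (fp w ψ).1 := by
  intro v
  rw [propEval_fp, propEval_fp, h]

end LTLf
/-- Lemma 2: observable progression preserves propositional
equivalence of the progressed formulas. -/
theorem fpObs_preserves_propEquiv {O U : Type} [Fintype O] [DecidableEq O]
    [Fintype U] [DecidableEq U]
    (φ ψ : LTLf (O ⊕ U)) (h : LTLf.propEquiv φ ψ) (wo : O → Bool) :
    LTLf.propEquiv (LTLf.fpObs φ wo).1 (LTLf.fpObs ψ wo).1 := by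
  unfold LTLf.fpObs
  induction (Finset.univ : Finset (U → Bool)).toList with
  | nil => intro v; rfl
  | cons wu l ih =>
      intro v
      simp only [List.map_cons, List.foldr_cons, LTLf.pand, LTLf.propEval]
      rw [LTLf.fp_preserves_propEquiv h (Sum.elim wo wu) v, ih v]
end

section
/- Formula progression stays inside the Boolean closure of the subformulas: for every LTLf formula φ over P and every assignment w ∈ B^P, the formula component of fp(φ, w) belongs to the Boolean closure of sf(φ). More generally, if ψ belongs to the Boolean closure of sf(φ), then for every w ∈ B^P the formula component of fp(ψ, w) also belongs to the Boolean closure of sf(φ). -/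
lemma LTLf.mem_sf_self {P : Type} (φ : LTLf P) : φ ∈ LTLf.sf φ := by
  cases φ <;> simp [LTLf.sf]

lemma LTLf.sf_subset {P : Type} (φ : LTLf P) :
    ∀ ψ ∈ LTLf.sf φ, LTLf.sf ψ ⊆ LTLf.sf φ := by
  induction φ with
  | tt => intro ψ h; simp [LTLf.sf] at h; subst h; simp [LTLf.sf]
  | ff => intro ψ h; simp [LTLf.sf] at h; subst h; simp [LTLf.sf]
  | atom p => intro ψ h; simp [LTLf.sf] at h; subst h; simp [LTLf.sf]
  | not φ ih =>
    intro ψ h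
    rcases h with h | h
    · subst h; exact subset_rfl
    · exact (ih ψ h).trans (Set.subset_insert _ _)
  | next φ ih =>
    intro ψ h
    rcases h with h | h
    · subst h; exact subset_rfl
    · exact (ih ψ h).trans (Set.subset_insert _ _)
  | snext φ ih =>
    intro ψ h
    rcases h with h | h
    · subst h; exact subset_rfl
    · exact (ih ψ h).trans (Set.subset_insert _ _)
  | fin φ ih =>
    intro ψ h
    rcases h with h | h
    · subst h; exact subset_rfl
    · exact (ih ψ h).trans (Set.subset_insert _ _)
  | glob φ ih =>
    intro ψ h
    rcases h with h | h
    · subst h; exact subset_rfl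
    · exact (ih ψ h).trans (Set.subset_insert _ _)
  | and φ χ ih1 ih2 =>
    intro ψ h
    rcases h with h | h | h
    · subst h; exact subset_rfl
    · exact (ih1 ψ h).trans ((Set.subset_union_left).trans (Set.subset_insert _ _))
    · exact (ih2 ψ h).trans ((Set.subset_union_right).trans (Set.subset_insert _ _))
  | or φ χ ih1 ih2 =>
    intro ψ h
    rcases h with h | h | h
    · subst h; exact subset_rfl
    · exact (ih1 ψ h).trans ((Set.subset_union_left).trans (Set.subset_insert _ _))
    · exact (ih2 ψ h).trans ((Set.subset_union_right).trans (Set.subset_insert _ _))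
  | untl φ χ ih1 ih2 =>
    intro ψ h
    rcases h with h | h | h
    · subst h; exact subset_rfl
    · exact (ih1 ψ h).trans ((Set.subset_union_left).trans (Set.subset_insert _ _))
    · exact (ih2 ψ h).trans ((Set.subset_union_right).trans (Set.subset_insert _ _))
  | rels φ χ ih1 ih2 =>
    intro ψ h
    rcases h with h | h | h
    · subst h; exact subset_rfl
    · exact (ih1 ψ h).trans ((Set.subset_union_left).trans (Set.subset_insert _ _))
    · exact (ih2 ψ h).trans ((Set.subset_union_right).trans (Set.subset_insert _ _))

lemma LTLf.fp_bc_of_sf_subset {P : Type} (X : Set (LTLf P)) (w : P → Bool) :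
    ∀ ψ : LTLf P, LTLf.sf ψ ⊆ X → LTLf.BC X (LTLf.fp w ψ).1 := by
  intro ψ
  induction ψ with
  | tt => intro _; exact LTLf.BC.tt'
  | ff => intro _; exact LTLf.BC.ff'
  | atom p =>
    intro _
    simp only [LTLf.fp]
    split <;> [exact LTLf.BC.tt'; exact LTLf.BC.ff']
  | not φ ih =>
    intro h
    exact LTLf.BC.not' (ih fun x hx => h (by simp [LTLf.sf]; right; exact hx))
  | and φ χ ih1 ih2 =>
    intro h
    exact LTLf.BC.and' (ih1 fun x hx => h (by simp [LTLf.sf]; tauto))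
      (ih2 fun x hx => h (by simp [LTLf.sf]; tauto))
  | or φ χ ih1 ih2 =>
    intro h
    exact LTLf.BC.or' (ih1 fun x hx => h (by simp [LTLf.sf]; tauto))
      (ih2 fun x hx => h (by simp [LTLf.sf]; tauto))
  | next φ _ =>
    intro h
    exact LTLf.BC.base (h (by simp [LTLf.sf]; right; exact LTLf.mem_sf_self φ))
  | snext φ _ =>
    intro h
    exact LTLf.BC.base (h (by simp [LTLf.sf]; right; exact LTLf.mem_sf_self φ))
  | fin φ ih =>
    intro h
    exact LTLf.BC.or' (ih fun x hx => h (by simp [LTLf.sf]; tauto))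
      (LTLf.BC.base (h (by simp [LTLf.sf])))
  | glob φ ih =>
    intro h
    exact LTLf.BC.and' (ih fun x hx => h (by simp [LTLf.sf]; tauto))
      (LTLf.BC.base (h (by simp [LTLf.sf])))
  | untl φ χ ih1 ih2 =>
    intro h
    exact LTLf.BC.or' (ih2 fun x hx => h (by simp [LTLf.sf]; tauto))
      (LTLf.BC.and' (ih1 fun x hx => h (by simp [LTLf.sf]; tauto))
        (LTLf.BC.base (h (by simp [LTLf.sf]))))
  | rels φ χ ih1 ih2 =>
    intro h
    exact LTLf.BC.and' (ih2 fun x hx => h (by simp [LTLf.sf]; tauto))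
      (LTLf.BC.or' (ih1 fun x hx => h (by simp [LTLf.sf]; tauto))
        (LTLf.BC.base (h (by simp [LTLf.sf]))))

/-- formula progression stays inside the Boolean closure of the
subformulas of `φ`. -/
theorem fp_mem_booleanClosure {P : Type} [Fintype P] [DecidableEq P]
    (φ : LTLf P) :
    (∀ w : P → Bool, LTLf.BC (LTLf.sf φ) (LTLf.fp w φ).1) ∧
      (∀ ψ : LTLf P, LTLf.BC (LTLf.sf φ) ψ →
        ∀ w : P → Bool, LTLf.BC (LTLf.sf φ) (LTLf.fp w ψ).1) := by
  constructor
  · intro w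
    exact LTLf.fp_bc_of_sf_subset _ w φ subset_rfl
  · intro ψ hψ w
    induction hψ with
    | base h => exact LTLf.fp_bc_of_sf_subset _ w _ (LTLf.sf_subset φ _ h)
    | tt' => exact LTLf.BC.tt'
    | ff' => exact LTLf.BC.ff'
    | not' _ ih => exact LTLf.BC.not' ih
    | and' _ _ ih1 ih2 => exact LTLf.BC.and' ih1 ih2
    | or' _ _ ih1 ih2 => exact LTLf.BC.or' ih1 ih2
end

section
/- Doubly exponential bound on the progression DFA under full observability: for every LTLf formula φ over P, the set Reach(φ) = {[φ]_∼} ∪ {[ψ']_∼ : ψ' is the formula component of fp(φ, σ) for some σ ∈ (B^P)^+} of reachable states modulo propositional equivalence is finite and has cardinality at most 2^(2^n), where n = |sf(φ)|. -/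
namespace LTLf

variable {P O U : Type}

lemma sf_self (φ : LTLf P) : φ ∈ sf φ := by
  cases φ <;> simp [sf]

lemma sf_trans (φ : LTLf P) : ∀ ψ ∈ sf φ, sf ψ ⊆ sf φ := by
  induction φ with
  | tt => intro ψ h; simp [sf] at h; subst h; rfl
  | ff => intro ψ h; simp [sf] at h; subst h; rfl
  | atom p => intro ψ h; simp [sf] at h; subst h; rfl
  | not a ih =>
      intro ψ h; simp [sf] at h
      rcases h with rfl | h
      · rfl
      · exact (ih ψ h).trans (Set.subset_insert _ _)
  | and a b iha ihb =>
      intro ψ h; simp [sf] at h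
      rcases h with rfl | h | h
      · rfl
      · exact (iha ψ h).trans ((Set.subset_union_left).trans (Set.subset_insert _ _))
      · exact (ihb ψ h).trans ((Set.subset_union_right).trans (Set.subset_insert _ _))
  | or a b iha ihb =>
      intro ψ h; simp [sf] at h
      rcases h with rfl | h | h
      · rfl
      · exact (iha ψ h).trans ((Set.subset_union_left).trans (Set.subset_insert _ _))
      · exact (ihb ψ h).trans ((Set.subset_union_right).trans (Set.subset_insert _ _))
  | next a ih =>
      intro ψ h; simp [sf] at h
      rcases h with rfl | h
      · rfl
      · exact (ih ψ h).trans (Set.subset_insert _ _)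
  | snext a ih =>
      intro ψ h; simp [sf] at h
      rcases h with rfl | h
      · rfl
      · exact (ih ψ h).trans (Set.subset_insert _ _)
  | fin a ih =>
      intro ψ h; simp [sf] at h
      rcases h with rfl | h
      · rfl
      · exact (ih ψ h).trans (Set.subset_insert _ _)
  | glob a ih =>
      intro ψ h; simp [sf] at h
      rcases h with rfl | h
      · rfl
      · exact (ih ψ h).trans (Set.subset_insert _ _)
  | untl a b iha ihb =>
      intro ψ h; simp [sf] at h
      rcases h with rfl | h | h
      · rfl
      · exact (iha ψ h).trans ((Set.subset_union_left).trans (Set.subset_insert _ _))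
      · exact (ihb ψ h).trans ((Set.subset_union_right).trans (Set.subset_insert _ _))
  | rels a b iha ihb =>
      intro ψ h; simp [sf] at h
      rcases h with rfl | h | h
      · rfl
      · exact (iha ψ h).trans ((Set.subset_union_left).trans (Set.subset_insert _ _))
      · exact (ihb ψ h).trans ((Set.subset_union_right).trans (Set.subset_insert _ _))

lemma sf_finite (φ : LTLf P) : (sf φ).Finite := by
  induction φ with
  | tt => simp [sf]
  | ff => simp [sf]
  | atom p => simp [sf]
  | not a ih => exact (ih.insert _)
  | and a b iha ihb => exact ((iha.union ihb).insert _)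
  | or a b iha ihb => exact ((iha.union ihb).insert _)
  | next a ih => exact (ih.insert _)
  | snext a ih => exact (ih.insert _)
  | fin a ih => exact (ih.insert _)
  | glob a ih => exact (ih.insert _)
  | untl a b iha ihb => exact ((iha.union ihb).insert _)
  | rels a b iha ihb => exact ((iha.union ihb).insert _)

lemma fp_mem_BC_aux (φ : LTLf P) (w : P → Bool) :
    ∀ ψ : LTLf P, sf ψ ⊆ sf φ → BC (sf φ) (fp w ψ).1 := by
  intro ψ
  induction ψ with
  | tt => intro _; exact BC.tt'
  | ff => intro _; exact BC.ff'
  | atom p =>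
      intro _
      by_cases hp : w p = true <;> simp [fp, hp]
      · exact BC.tt'
      · exact BC.ff'
  | not a ih =>
      intro h
      have ha : sf a ⊆ sf φ := fun x hx => h (by simp [sf]; exact Or.inr hx)
      exact BC.not' (ih ha)
  | and a b iha ihb =>
      intro h
      have ha : sf a ⊆ sf φ := fun x hx => h (by simp [sf]; exact Or.inr (Or.inl hx))
      have hb : sf b ⊆ sf φ := fun x hx => h (by simp [sf]; exact Or.inr (Or.inr hx))
      exact BC.and' (iha ha) (ihb hb)
  | or a b iha ihb =>
      intro h
      have ha : sf a ⊆ sf φ := fun x hx => h (by simp [sf]; exact Or.inr (Or.inl hx))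
      have hb : sf b ⊆ sf φ := fun x hx => h (by simp [sf]; exact Or.inr (Or.inr hx))
      exact BC.or' (iha ha) (ihb hb)
  | next a ih =>
      intro h
      exact BC.base (h (by simp [sf]; exact Or.inr (sf_self a)))
  | snext a ih =>
      intro h
      exact BC.base (h (by simp [sf]; exact Or.inr (sf_self a)))
  | fin a ih =>
      intro h
      have ha : sf a ⊆ sf φ := fun x hx => h (by simp [sf]; exact Or.inr hx)
      exact BC.or' (ih ha) (BC.base (h (by simp [sf])))
  | glob a ih =>
      intro h
      have ha : sf a ⊆ sf φ := fun x hx => h (by simp [sf]; exact Or.inr hx)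
      exact BC.and' (ih ha) (BC.base (h (by simp [sf])))
  | untl a b iha ihb =>
      intro h
      have ha : sf a ⊆ sf φ := fun x hx => h (by simp [sf]; exact Or.inr (Or.inl hx))
      have hb : sf b ⊆ sf φ := fun x hx => h (by simp [sf]; exact Or.inr (Or.inr hx))
      exact BC.or' (ihb hb) (BC.and' (iha ha) (BC.base (h (by simp [sf]))))
  | rels a b iha ihb =>
      intro h
      have ha : sf a ⊆ sf φ := fun x hx => h (by simp [sf]; exact Or.inr (Or.inl hx))
      have hb : sf b ⊆ sf φ := fun x hx => h (by simp [sf]; exact Or.inr (Or.inr hx))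
      exact BC.and' (ihb hb) (BC.or' (iha ha) (BC.base (h (by simp [sf]))))

lemma fp_BC (φ : LTLf P) (w : P → Bool) :
    ∀ ψ, BC (sf φ) ψ → BC (sf φ) (fp w ψ).1 := by
  intro ψ h
  induction h with
  | base hm => exact fp_mem_BC_aux φ w _ (sf_trans φ _ hm)
  | tt' => exact BC.tt'
  | ff' => exact BC.ff'
  | not' _ ih => exact BC.not' ih
  | and' _ _ ih1 ih2 => exact BC.and' ih1 ih2
  | or' _ _ ih1 ih2 => exact BC.or' ih1 ih2

lemma fpWord_BC (φ0 : LTLf P) :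
    ∀ (ws : List (P → Bool)) (ψ : LTLf P) (w : P → Bool),
      BC (sf φ0) ψ → BC (sf φ0) (fpWord ψ w ws).1 := by
  intro ws
  induction ws with
  | nil => intro ψ w h; exact fp_BC φ0 w ψ h
  | cons w' ws ih => intro ψ w h; exact ih _ w' (fp_BC φ0 w ψ h)

lemma propEval_agree (v v' : LTLf P → Bool) :
    ∀ ψ : LTLf P,
      (∀ χ ∈ sf ψ, isAtomicOrTemporal χ → v χ = v' χ) →
      propEval v ψ = propEval v' ψ := by
  intro ψ
  induction ψ with
  | tt => intro _; rfl
  | ff => intro _; rfl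
  | atom p => intro h; exact h _ (sf_self _) trivial
  | not a ih =>
      intro h
      have := ih (fun χ hχ hat => h χ (by simp [sf]; exact Or.inr hχ) hat)
      simp [propEval, this]
  | and a b iha ihb =>
      intro h
      have h1 := iha (fun χ hχ hat => h χ (by simp [sf]; exact Or.inr (Or.inl hχ)) hat)
      have h2 := ihb (fun χ hχ hat => h χ (by simp [sf]; exact Or.inr (Or.inr hχ)) hat)
      simp [propEval, h1, h2]
  | or a b iha ihb =>
      intro h
      have h1 := iha (fun χ hχ hat => h χ (by simp [sf]; exact Or.inr (Or.inl hχ)) hat)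
      have h2 := ihb (fun χ hχ hat => h χ (by simp [sf]; exact Or.inr (Or.inr hχ)) hat)
      simp [propEval, h1, h2]
  | next a _ => intro h; exact h _ (sf_self _) trivial
  | snext a _ => intro h; exact h _ (sf_self _) trivial
  | fin a _ => intro h; exact h _ (sf_self _) trivial
  | glob a _ => intro h; exact h _ (sf_self _) trivial
  | untl a b _ _ => intro h; exact h _ (sf_self _) trivial
  | rels a b _ _ => intro h; exact h _ (sf_self _) trivial

lemma BC_sf_atomic (φ : LTLf P) :
    ∀ ψ, BC (sf φ) ψ → ∀ χ ∈ sf ψ, isAtomicOrTemporal χ → χ ∈ sf φ := by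
  intro ψ h
  induction h with
  | base hm => intro χ hχ _; exact sf_trans φ _ hm hχ
  | tt' =>
      intro χ hχ hat; simp [sf] at hχ; subst hχ
      exact absurd hat (by simp [isAtomicOrTemporal])
  | ff' =>
      intro χ hχ hat; simp [sf] at hχ; subst hχ
      exact absurd hat (by simp [isAtomicOrTemporal])
  | not' _ ih =>
      intro χ hχ hat; simp [sf] at hχ
      rcases hχ with rfl | hχ
      · exact absurd hat (by simp [isAtomicOrTemporal])
      · exact ih χ hχ hat
  | and' _ _ ih1 ih2 =>
      intro χ hχ hat; simp [sf] at hχ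
      rcases hχ with rfl | hχ | hχ
      · exact absurd hat (by simp [isAtomicOrTemporal])
      · exact ih1 χ hχ hat
      · exact ih2 χ hχ hat
  | or' _ _ ih1 ih2 =>
      intro χ hχ hat; simp [sf] at hχ
      rcases hχ with rfl | hχ | hχ
      · exact absurd hat (by simp [isAtomicOrTemporal])
      · exact ih1 χ hχ hat
      · exact ih2 χ hχ hat

end LTLf
/-- doubly exponential bound on the reachable states (modulo
propositional equivalence) of the progression DFA under full observability. -/
theorem reach_card_le {P : Type} [Fintype P] [DecidableEq P] (φ : LTLf P) :
    Set.Finite {s : Set (LTLf P) | s = LTLf.pcls φ ∨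
        ∃ (w : P → Bool) (ws : List (P → Bool)),
          s = LTLf.pcls (LTLf.fpWord φ w ws).1} ∧
      Set.ncard {s : Set (LTLf P) | s = LTLf.pcls φ ∨
        ∃ (w : P → Bool) (ws : List (P → Bool)),
          s = LTLf.pcls (LTLf.fpWord φ w ws).1} ≤
        2 ^ 2 ^ (LTLf.sf φ).ncard := by
  classical
  set S : Set (Set (LTLf P)) := {s : Set (LTLf P) | s = LTLf.pcls φ ∨
        ∃ (w : P → Bool) (ws : List (P → Bool)),
          s = LTLf.pcls (LTLf.fpWord φ w ws).1} with hS
  have hfin : (LTLf.sf φ).Finite := LTLf.sf_finite φ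
  set F : Finset (LTLf P) := hfin.toFinset with hF
  have hmemF : ∀ χ, χ ∈ F ↔ χ ∈ LTLf.sf φ := fun χ => hfin.mem_toFinset
  -- truth-table map
  set e : LTLf P → ((F → Bool) → Bool) :=
    fun ψ g => LTLf.propEval (fun χ => if h : χ ∈ F then g ⟨χ, h⟩ else false) ψ with he
  -- key: e is injective modulo propositional equivalence on the Boolean closure
  have key : ∀ ψ₁ ψ₂ : LTLf P, LTLf.BC (LTLf.sf φ) ψ₁ → LTLf.BC (LTLf.sf φ) ψ₂ →
      e ψ₁ = e ψ₂ → LTLf.pcls ψ₁ = LTLf.pcls ψ₂ := by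
    intro ψ₁ ψ₂ h1 h2 heq
    have hequiv : LTLf.propEquiv ψ₁ ψ₂ := by
      intro v
      set v' : LTLf P → Bool :=
        fun χ => if h : χ ∈ F then v χ else false with hv'
      have hagree : ∀ ψ, LTLf.BC (LTLf.sf φ) ψ →
          LTLf.propEval v ψ = LTLf.propEval v' ψ := by
        intro ψ hψ
        refine LTLf.propEval_agree v v' ψ (fun χ hχ hat => ?_)
        have : χ ∈ LTLf.sf φ := LTLf.BC_sf_atomic φ ψ hψ χ hχ hat
        simp [hv', (hmemF χ).2 this]
      have hv'e : v' = fun χ => if h : χ ∈ F then (fun x : F => v x.1) ⟨χ, h⟩ else false := by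
        funext χ; by_cases h : χ ∈ F <;> simp [hv', h]
      calc LTLf.propEval v ψ₁ = LTLf.propEval v' ψ₁ := hagree ψ₁ h1
        _ = e ψ₁ (fun x : F => v x.1) := by rw [he, hv'e]
        _ = e ψ₂ (fun x : F => v x.1) := by rw [heq]
        _ = LTLf.propEval v' ψ₂ := by rw [he, hv'e]
        _ = LTLf.propEval v ψ₂ := (hagree ψ₂ h2).symm
    ext χ
    constructor
    · intro hχ v; exact (hequiv v).symm.trans (hχ v)
    · intro hχ v; exact (hequiv v).trans (hχ v)
  -- every element of S is the class of some formula in the Boolean closure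
  have hex : ∀ s ∈ S, ∃ ψ : LTLf P, LTLf.BC (LTLf.sf φ) ψ ∧ s = LTLf.pcls ψ := by
    intro s hs
    rcases hs with rfl | ⟨w, ws, rfl⟩
    · exact ⟨φ, LTLf.BC.base (LTLf.sf_self φ), rfl⟩
    · exact ⟨(LTLf.fpWord φ w ws).1,
        LTLf.fpWord_BC φ ws φ w (LTLf.BC.base (LTLf.sf_self φ)), rfl⟩
  -- injection from S into truth tables
  set j : S → ((F → Bool) → Bool) :=
    fun x => e (Classical.choose (hex x.1 x.2)) with hj
  have hjinj : Function.Injective j := by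
    intro x y hxy
    obtain ⟨hb1, hc1⟩ := Classical.choose_spec (hex x.1 x.2)
    obtain ⟨hb2, hc2⟩ := Classical.choose_spec (hex y.1 y.2)
    have := key _ _ hb1 hb2 hxy
    exact Subtype.ext (hc1.trans (this.trans hc2.symm))
  have hfinS : Finite S := Finite.of_injective j hjinj
  have hSfin : S.Finite := Set.finite_coe_iff.mpr hfinS
  refine ⟨hSfin, ?_⟩
  have hcard : S.ncard ≤ Fintype.card ((F → Bool) → Bool) := by
    rw [← Nat.card_coe_set_eq]
    calc Nat.card S ≤ Nat.card ((F → Bool) → Bool) :=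
          Nat.card_le_card_of_injective j hjinj
      _ = Fintype.card ((F → Bool) → Bool) := Nat.card_eq_fintype_card
  have hcard2 : Fintype.card ((F → Bool) → Bool) = 2 ^ 2 ^ (LTLf.sf φ).ncard := by
    rw [Fintype.card_fun, Fintype.card_fun, Fintype.card_bool, Fintype.card_coe,
      ← Set.ncard_eq_toFinset_card (LTLf.sf φ) hfin]
  rw [hcard2] at hcard
  exact hcard
end
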